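/- arXiv:0711.2502 — 3 statements merged into one kernel-verified Lean document; each statement's English description precedes it below -/
import Mathlib

section
/- Let G be a group, let Γ be a compact topological group equipped with a Haar probability measure m, and let π : G → Γ be a surjective group homomorphism. Let X ⊆ G and let g₁, …, g_k ∈ G be finitely many elements such that G = g₁X ∪ … ∪ g_kX. Assume that for each i ∈ {1, …, k} the set {y ∈ Γ : π⁻¹({y}) ∩ gᵢX ≠ ∅ and π⁻¹({y}) ∩ (gᵢX)ᶜ ≠ ∅} has m-measure zero. Then there exists g ∈ G such that π⁻¹({1}) ⊆ gX, i.e. some left translate of X contains the kernel of π. -/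
open MeasureTheory Pointwise

/-! Countably many null sets cannot cover `Γ`, so some `y = π h` avoids all the exceptional sets.
The translate `gᵢ • X` containing `h` then contains the whole fiber `π ⁻¹' {π h} = h • ker π`,
and `h⁻¹ gᵢ • X` contains `ker π`. -/

theorem MeasureTheory.exists_forall_notMem_of_measure_eq_zero {α ι : Type*} [MeasurableSpace α]
    [Countable ι] (μ : Measure α) [NeZero μ] {s : ι → Set α} (hs : ∀ i, μ (s i) = 0) :
    ∃ a, ∀ i, a ∉ s i :=
  (ae_all_iff.2 fun i => measure_eq_zero_iff_ae_notMem.1 (hs i)).exists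

theorem Set.subset_of_inter_nonempty_of_not_split {α : Type*} {A S : Set α}
    (hsplit : ¬((A ∩ S).Nonempty ∧ (A ∩ Sᶜ).Nonempty)) (hmeet : (A ∩ S).Nonempty) : A ⊆ S := by
  intro x hx
  by_contra hxS
  exact hsplit ⟨hmeet, x, hx, hxS⟩

theorem MonoidHom.preimage_singleton_apply_eq_smul {G H : Type*} [Group G] [Group H]
    (π : G →* H) (h : G) : π ⁻¹' {π h} = h • π ⁻¹' {1} := by
  ext x
  simp only [Set.mem_smul_set_iff_inv_smul_mem, Set.mem_preimage, Set.mem_singleton_iff, smul_eq_mul,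
    map_mul, map_inv, inv_mul_eq_one]
  exact eq_comm

theorem stmt0_general {G Γ : Type*} [Group G] [Group Γ]
    [MeasurableSpace Γ] (m : Measure Γ)
    [IsProbabilityMeasure m] (π : G →* Γ) (hπ : Function.Surjective π)
    (X : Set G) (k : ℕ) (g : Fin k → G)
    (hcover : (⋃ i, g i • X) = Set.univ)
    (hdom : ∀ i : Fin k,
      m {y : Γ | (π ⁻¹' {y} ∩ g i • X).Nonempty ∧ (π ⁻¹' {y} ∩ (g i • X)ᶜ).Nonempty} = 0) :
    ∃ g₀ : G, π ⁻¹' {1} ⊆ g₀ • X := by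
  obtain ⟨y, hy⟩ := exists_forall_notMem_of_measure_eq_zero m hdom
  obtain ⟨h, rfl⟩ := hπ y
  obtain ⟨i, hi⟩ := Set.mem_iUnion.1 (hcover ▸ Set.mem_univ h)
  have hfiber : π ⁻¹' {π h} ⊆ g i • X :=
    Set.subset_of_inter_nonempty_of_not_split (hy i) ⟨h, rfl, hi⟩
  rw [π.preimage_singleton_apply_eq_smul, Set.smul_set_subset_iff_subset_inv_smul_set] at hfiber
  exact ⟨h⁻¹ * g i, by rwa [mul_smul]⟩

/-- Section 2, Proposition: if `G` is covered by finitely many left translates of `X`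
and almost every fiber of `π` is contained in each translate or in its complement,
then some left translate of `X` contains the kernel of `π`. -/
theorem stmt0 {G Γ : Type*} [Group G] [Group Γ] [TopologicalSpace Γ] [CompactSpace Γ]
    [IsTopologicalGroup Γ] [MeasurableSpace Γ] (m : Measure Γ) [m.IsHaarMeasure]
    [IsProbabilityMeasure m] (π : G →* Γ) (hπ : Function.Surjective π)
    (X : Set G) (k : ℕ) (g : Fin k → G)
    (hcover : (⋃ i, g i • X) = Set.univ)
    (hdom : ∀ i : Fin k,
      m {y : Γ | (π ⁻¹' {y} ∩ g i • X).Nonempty ∧ (π ⁻¹' {y} ∩ (g i • X)ᶜ).Nonempty} = 0) :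
    ∃ g₀ : G, π ⁻¹' {1} ⊆ g₀ • X :=
  stmt0_general m π hπ X k g hcover hdom
end

section
/- Let G be a topological space, let Γ be a set, let π : G → Γ be a function such that every fiber π⁻¹({y}) is open and preconnected in G, and let m be a measure on Γ. Let 𝒜 be a collection of subsets of G closed under complementation, such that for every X ∈ 𝒜 the frontier of X belongs to 𝒜 and has empty interior. Then the following are equivalent: (i) for every X ∈ 𝒜, m(π(X) ∩ π(Xᶜ)) = 0; (ii) for every X ∈ 𝒜 with empty interior, m(π(X)) = 0. -/
open MeasureTheory

lemma preconn_meets_frontier {G : Type*} [TopologicalSpace G] {S X : Set G}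
    (hS : IsPreconnected S) (h1 : (S ∩ X).Nonempty) (h2 : (S ∩ Xᶜ).Nonempty) :
    (S ∩ frontier X).Nonempty := by
  by_contra h
  rw [Set.not_nonempty_iff_eq_empty] at h
  have hdisj : ∀ x ∈ S, x ∉ frontier X := by
    intro x hx hfx
    exact absurd h (Set.nonempty_iff_ne_empty.mp ⟨x, hx, hfx⟩)
  have hmem : ∀ x ∈ S, x ∈ X → x ∈ interior X := by
    intro x hx hxX
    by_contra hInt
    exact hdisj x hx ⟨subset_closure hxX, hInt⟩
  have hmem' : ∀ x ∈ S, x ∈ Xᶜ → x ∈ interior Xᶜ := by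
    intro x hx hxX
    rw [interior_compl]
    intro hcl
    exact hdisj x hx ⟨hcl, fun hi => hxX (interior_subset hi)⟩
  have key := hS (interior X) (interior Xᶜ) isOpen_interior isOpen_interior
    (fun x hx => (em (x ∈ X)).imp (hmem x hx) (hmem' x hx))
    (h1.imp fun x ⟨hxS, hxX⟩ => ⟨hxS, hmem x hxS hxX⟩)
    (h2.imp fun x ⟨hxS, hxX⟩ => ⟨hxS, hmem' x hxS hxX⟩)
  obtain ⟨x, _, hx1, hx2⟩ := key
  exact (interior_subset hx2) (interior_subset hx1)

/-- Section 2: equivalence between compact domination and the condition that the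
image under `π` of any set of `𝒜` with empty interior has measure zero, given
that the fibers of `π` are open and preconnected and that `𝒜` is closed under
complements and frontiers, frontiers having empty interior. -/
theorem stmt7 {G Γ : Type*} [TopologicalSpace G] [MeasurableSpace Γ] (π : G → Γ)
    (hopen : ∀ y : Γ, IsOpen (π ⁻¹' {y}))
    (hconn : ∀ y : Γ, IsPreconnected (π ⁻¹' {y}))
    (m : Measure Γ) (𝒜 : Set (Set G)) (hcompl : ∀ X ∈ 𝒜, Xᶜ ∈ 𝒜)
    (hfront : ∀ X ∈ 𝒜, frontier X ∈ 𝒜 ∧ interior (frontier X) = ∅) :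
    (∀ X ∈ 𝒜, m (π '' X ∩ π '' Xᶜ) = 0) ↔
      (∀ X ∈ 𝒜, interior X = ∅ → m (π '' X) = 0) := by
  constructor
  · intro h X hX hint
    have hsub : π '' X ⊆ π '' X ∩ π '' Xᶜ := by
      rintro y ⟨x, hx, rfl⟩
      refine ⟨⟨x, hx, rfl⟩, ?_⟩
      -- the fiber is open and nonempty; if it were ⊆ X, it would be in interior X = ∅
      by_contra hc
      have hfib : π ⁻¹' {π x} ⊆ X := by
        intro z hz
        by_contra hzX
        exact hc ⟨z, hzX, hz⟩
      have : x ∈ interior X := (hopen (π x)).subset_interior_iff.mpr hfib rfl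
      rw [hint] at this
      exact this
    exact measure_mono_null hsub (h X hX)
  · intro h X hX
    have ⟨hfA, hfi⟩ := hfront X hX
    have hsub : π '' X ∩ π '' Xᶜ ⊆ π '' frontier X := by
      rintro y ⟨⟨x1, hx1, rfl⟩, ⟨x2, hx2, hx2'⟩⟩
      obtain ⟨z, hz1, hz2⟩ := preconn_meets_frontier (hconn (π x1))
        ⟨x1, rfl, hx1⟩ ⟨x2, hx2', hx2⟩
      exact ⟨z, hz2, hz1⟩
    exact measure_mono_null hsub (h _ hfA hfi)
end

section
/- Let P be a property of groups that is invariant under group isomorphism and satisfies: (extensions) for every group G and every normal subgroup N of G, if P holds for N and for G/N then P holds for G; (isogenies) for every group G and every finite normal subgroup N of G, if P holds for G then P holds for G/N. Let G be a group and let H₁, …, H_k (k ≥ 1) be normal subgroups of G such that G = H₁·H₂·⋯·H_k, P holds for each Hᵢ, and for each i the intersection Hᵢ ∩ (∏_{j≠i} Hⱼ) is finite. Then P holds for G. -/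
universe u

lemma normal_iSup_aux {G : Type u} [Group G] {ι : Sort*} (H : ι → Subgroup G)
    (h : ∀ i, (H i).Normal) : (⨆ i, H i).Normal := by
  constructor
  intro n hn g
  refine Subgroup.iSup_induction H (C := fun x => g * x * g⁻¹ ∈ ⨆ i, H i) hn
    (fun i x hx => Subgroup.mem_iSup_of_mem i ((h i).conj_mem x hx g)) (by simpa using one_mem (⨆ i, H i)) ?_
  intro x y hx hy
  have : g * (x * y) * g⁻¹ = (g * x * g⁻¹) * (g * y * g⁻¹) := by group
  rw [this]
  exact mul_mem hx hy

/-- Product-reduction in the proof of Theorem 5: a property of groups invariant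
under isomorphism and closed under extensions and isogenies holds for a group
which is the product of finitely many normal subgroups satisfying the property,
each of which meets the product of the others in a finite subgroup. -/
theorem stmt10 (P : ∀ (G : Type u) [Group G], Prop)
    (hiso : ∀ (G H : Type u) [Group G] [Group H], (G ≃* H) → P G → P H)
    (hext : ∀ (G : Type u) [Group G] (N : Subgroup G) [N.Normal],
      P N → P (G ⧸ N) → P G)
    (hisog : ∀ (G : Type u) [Group G] (N : Subgroup G) [N.Normal],
      Finite N → P G → P (G ⧸ N))
    (G : Type u) [Group G] (k : ℕ) (hk : 1 ≤ k) (H : Fin k → Subgroup G)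
    (hnormal : ∀ i, (H i).Normal)
    (hprod : (⨆ i, H i) = (⊤ : Subgroup G))
    (hP : ∀ i, P (H i))
    (hfin : ∀ i, Finite ((H i ⊓ ⨆ j ∈ {j | j ≠ i}, H j) : Subgroup G)) :
    P G := by
  classical
  set R : ℕ → Subgroup G := fun m => ⨆ i : Fin k, ⨆ _ : (i : ℕ) < m, H i with hRdef
  have hRnormal : ∀ m, (R m).Normal := by
    intro m
    exact normal_iSup_aux _ fun i => normal_iSup_aux _ fun _ => hnormal i
  have hRmono : ∀ {m n : ℕ}, m ≤ n → R m ≤ R n := by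
    intro m n hmn
    exact iSup_mono fun i => iSup_le fun h => le_iSup_of_le (lt_of_lt_of_le h hmn) le_rfl
  -- key step equality
  have hkey : ∀ m (hm : m < k), R (m + 1) = H ⟨m, hm⟩ ⊔ R m := by
    intro m hm
    apply le_antisymm
    · refine iSup_le fun i => iSup_le fun hi => ?_
      rcases Nat.lt_succ_iff_lt_or_eq.mp hi with h | h
      · exact le_sup_of_le_right (le_iSup_of_le i (le_iSup_of_le h le_rfl))
      · have : i = ⟨m, hm⟩ := Fin.ext h
        rw [this]; exact le_sup_left
    · refine sup_le ?_ (hRmono (Nat.le_succ m))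
      exact le_iSup_of_le ⟨m, hm⟩ (le_iSup_of_le (Nat.lt_succ_self m) le_rfl)
  -- R m ≤ sup of H j, j ≠ m
  have hRle : ∀ m (hm : m < k), R m ≤ ⨆ j ∈ {j | j ≠ (⟨m, hm⟩ : Fin k)}, H j := by
    intro m hm
    refine iSup_le fun i => iSup_le fun hi => ?_
    refine le_iSup_of_le i (le_iSup_of_le ?_ le_rfl)
    simp only [Set.mem_setOf_eq]
    intro h; rw [h] at hi; exact absurd hi (lt_irrefl m)
  have main : ∀ m, 1 ≤ m → m ≤ k → P (R m) := by
    intro m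
    induction m with
    | zero => intro h; omega
    | succ m ih =>
      intro _ hmk
      rcases Nat.eq_zero_or_pos m with rfl | hm1
      · -- base case: R 1 = H ⟨0⟩
        have : R 1 = H ⟨0, hk⟩ := by
          apply le_antisymm
          · refine iSup_le fun i => iSup_le fun hi => ?_
            have hi0 : (i : ℕ) = 0 := by omega
            have : i = ⟨0, hk⟩ := Fin.ext (by simp [hi0])
            rw [this]
          · exact le_iSup_of_le ⟨0, hk⟩ (le_iSup_of_le Nat.one_pos le_rfl)
        rw [this]; exact hP _
      · have hm : m < k := by omega
        have hPR : P (R m) := ih hm1 (le_of_lt hm)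
        set i : Fin k := ⟨m, hm⟩ with hi
        haveI := hRnormal m
        haveI := hRnormal (m + 1)
        haveI : ((R m).subgroupOf (R (m + 1))).Normal := (hRnormal m).subgroupOf _
        apply hext _ ((R m).subgroupOf (R (m + 1)))
        · exact hiso _ _ (Subgroup.subgroupOfEquivOfLe (hRmono (Nat.le_succ m))).symm hPR
        · -- quotient
          haveI : ((R m).subgroupOf (H i)).Normal := (hRnormal m).subgroupOf _
          have hfin' : Finite ((R m).subgroupOf (H i)) := by
            have hle : H i ⊓ R m ≤ H i ⊓ ⨆ j ∈ {j | j ≠ i}, H j :=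
              inf_le_inf_left _ (hRle m hm)
            haveI := hfin i
            have : Function.Injective fun x : ((R m).subgroupOf (H i)) =>
                (⟨(x : H i), (x : H i).2, x.2⟩ : (H i ⊓ R m : Subgroup G)) := by
              intro a b hab
              have h2 : ((a : H i) : G) = ((b : H i) : G) := congrArg (fun y : (H i ⊓ R m : Subgroup G) => (y : G)) hab
              exact Subtype.ext (Subtype.ext h2)
            have h1 : Finite ((H i ⊓ R m : Subgroup G)) :=
              Finite.of_injective (Subgroup.inclusion hle) (Subgroup.inclusion_injective hle)
            exact Finite.of_injective _ this
          have hq : P ((H i) ⧸ (R m).subgroupOf (H i)) := hisog _ _ hfin' (hP i)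
          have e := QuotientGroup.quotientInfEquivProdNormalQuotient (H i) (R m)
          have hsup : H i ⊔ R m = R (m + 1) := (hkey m hm).symm
          rw [hsup] at e
          exact hiso _ _ e hq
  have := main k hk le_rfl
  have htop : R k = ⊤ := by
    rw [← hprod]
    apply le_antisymm
    · exact iSup_le fun i => iSup_le fun _ => le_iSup H i
    · exact iSup_le fun i => le_iSup_of_le i (le_iSup_of_le i.2 le_rfl)
  rw [htop] at this
  exact hiso _ _ Subgroup.topEquiv this
end
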